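/- Let q1, q2 : ℝ → ℝ be smooth and nonvanishing, let k0 be a real constant, let k1, r10, r20 be nonzero real constants, and set E(t) = exp(k0 ∫₀ᵗ q1(s) ds). Define p1 = k1 q1 E, p2 = −r10 k1 q1 E^{−1}, r1 = r10 E^{−2}, r2 = r20 (q1/q2) E^{−2} (the Table 1 coefficient family). Then these coefficients satisfy all the determining constraints of the Virasoro-invariant (integrable) case: (i) p2 + p1 r1 = 0; (ii) p1'/p1 − p2'/p2 + r1'/r1 = 0; (iii) q1'/q1 − q2'/q2 + r1'/r1 − r2'/r2 = 0; (iv) p1'/p1 − q1'/q1 + r1'/(2r1) = 0; and (v) 2 r1 p1' r1' + 3 p1 (r1')² − 2 p1 r1 r1'' = 0. -/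

import Mathlib

/-! Since `E' = k₀ q₁ E`, each coefficient is a nonzero constant times `q₁`, `q₁ / q₂` or `1`
times a power of `E`, so its logarithmic derivative is `q₁'/q₁`, `q₁'/q₁ - q₂'/q₂` or `0` plus an
integer multiple of `k₀ q₁`; this makes (ii)–(iv) linear identities. Constraint (v) is (iv) in
disguise: it follows from (iv) whenever `r₁'/r₁` is a constant multiple of `q₁`. -/

open Real

section LogDeriv

variable {𝕜 𝕜' : Type*} [NontriviallyNormedField 𝕜] [NontriviallyNormedField 𝕜']
  [NormedAlgebra 𝕜 𝕜']

theorem deriv_eq_logDeriv_mul {f : 𝕜 → 𝕜'} {x : 𝕜} (hf : f x ≠ 0) :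
    deriv f x = logDeriv f x * f x :=
  (div_mul_cancel₀ _ hf).symm

theorem logDeriv_fun_inv_pow {f : 𝕜 → 𝕜'} {x : 𝕜} (hf : DifferentiableAt 𝕜 f x) (n : ℕ) :
    logDeriv (fun t => (f t)⁻¹ ^ n) x = -(n * logDeriv f x) := by
  simpa using logDeriv_fun_zpow hf (-n)

theorem logDeriv_const_mul_mul {f g : 𝕜 → 𝕜'} {x : 𝕜} {c : 𝕜'} (hc : c ≠ 0) (hf : f x ≠ 0)
    (hg : g x ≠ 0) (hdf : DifferentiableAt 𝕜 f x) (hdg : DifferentiableAt 𝕜 g x) :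
    logDeriv (fun t => c * f t * g t) x = logDeriv f x + logDeriv g x := by
  rw [logDeriv_mul (f := fun t => c * f t) x (mul_ne_zero hc hf) hg (hdf.const_mul c) hdg,
    logDeriv_const_mul x c hc]

theorem logDeriv_const_mul_mul_inv_pow {f g : 𝕜 → 𝕜'} {x : 𝕜} {c : 𝕜'} (n : ℕ) (hc : c ≠ 0)
    (hf : f x ≠ 0) (hg : g x ≠ 0) (hdf : DifferentiableAt 𝕜 f x) (hdg : DifferentiableAt 𝕜 g x) :
    logDeriv (fun t => c * f t * (g t)⁻¹ ^ n) x = logDeriv f x - n * logDeriv g x := by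
  rw [logDeriv_const_mul_mul (g := fun t => (g t)⁻¹ ^ n) hc hf (pow_ne_zero n (inv_ne_zero hg))
    hdf ((hdg.inv hg).pow n), logDeriv_fun_inv_pow hdg, sub_eq_add_neg]

theorem deriv_deriv_eq_of_logDeriv_eq {r L : 𝕜 → 𝕜} {x : 𝕜} (hr : Differentiable 𝕜 r)
    (hr0 : ∀ t, r t ≠ 0) (hL : logDeriv r = L) (hLx : DifferentiableAt 𝕜 L x) :
    deriv (deriv r) x = (deriv L x + L x ^ 2) * r x := by
  have hr' : deriv r = fun t => L t * r t :=
    funext fun t => hL ▸ deriv_eq_logDeriv_mul (hr0 t)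
  rw [hr', deriv_fun_mul hLx (hr x), hr']
  ring

end LogDeriv

theorem hasDerivAt_exp_mul_integral {f : ℝ → ℝ} (hf : Continuous f) (k a t : ℝ) :
    HasDerivAt (fun u => exp (k * ∫ s in a..u, f s))
      (exp (k * ∫ s in a..t, f s) * (k * f t)) t :=
  ((hf.integral_hasStrictDerivAt a t).hasDerivAt.const_mul k).exp

theorem logDeriv_exp_mul_integral {f : ℝ → ℝ} (hf : Continuous f) (k a t : ℝ) :
    logDeriv (fun u => exp (k * ∫ s in a..u, f s)) t = k * f t := by
  rw [logDeriv_apply, (hasDerivAt_exp_mul_integral hf k a t).deriv,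
    mul_div_cancel_left₀ _ (exp_ne_zero _)]

/-- With `P = p'/p` and `L = r'/r = c q`, one has `r'' = (L' + L²) r`, and the left-hand side
equals `p r² (2 P L + L² - 2 L')`, which vanishes once `P = q'/q - L/2`. -/
theorem second_order_constraint_of_logDeriv {p q r : ℝ → ℝ} {c t : ℝ}
    (hr : Differentiable ℝ r) (hr0 : ∀ t, r t ≠ 0) (hp0 : p t ≠ 0) (hq0 : q t ≠ 0)
    (hq : DifferentiableAt ℝ q t) (hLr : logDeriv r = fun t => c * q t)
    (hLp : logDeriv p t = logDeriv q t - logDeriv r t / 2) :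
    2 * r t * deriv p t * deriv r t + 3 * p t * deriv r t ^ 2
      - 2 * p t * r t * deriv (deriv r) t = 0 := by
  rw [deriv_eq_logDeriv_mul hp0, deriv_eq_logDeriv_mul (hr0 t),
    deriv_deriv_eq_of_logDeriv_eq hr hr0 hLr (hq.const_mul c), hLp, hLr,
    deriv_const_mul _ hq, logDeriv_apply]
  field_simp
  ring

theorem table1_family_satisfies_constraints
    (q1 q2 : ℝ → ℝ)
    (hq1 : ContDiff ℝ (⊤ : ℕ∞) q1) (hq2 : ContDiff ℝ (⊤ : ℕ∞) q2)
    (hq1ne : ∀ t : ℝ, q1 t ≠ 0) (hq2ne : ∀ t : ℝ, q2 t ≠ 0)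
    (k0 : ℝ) (k1 r10 r20 : ℝ) (hk1 : k1 ≠ 0) (hr10 : r10 ≠ 0) (hr20 : r20 ≠ 0)
    (E : ℝ → ℝ) (hE : ∀ t : ℝ, E t = Real.exp (k0 * ∫ s in (0:ℝ)..t, q1 s))
    (p1 p2 r1 r2 : ℝ → ℝ)
    (hp1 : ∀ t : ℝ, p1 t = k1 * q1 t * E t)
    (hp2 : ∀ t : ℝ, p2 t = -r10 * k1 * q1 t * (E t)⁻¹)
    (hr1 : ∀ t : ℝ, r1 t = r10 * (E t)⁻¹^2)
    (hr2 : ∀ t : ℝ, r2 t = r20 * (q1 t / q2 t) * (E t)⁻¹^2) :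
    (∀ t : ℝ, p2 t + p1 t * r1 t = 0)
    ∧ (∀ t : ℝ, deriv p1 t / p1 t - deriv p2 t / p2 t + deriv r1 t / r1 t = 0)
    ∧ (∀ t : ℝ, deriv q1 t / q1 t - deriv q2 t / q2 t
        + deriv r1 t / r1 t - deriv r2 t / r2 t = 0)
    ∧ (∀ t : ℝ, deriv p1 t / p1 t - deriv q1 t / q1 t + deriv r1 t / (2 * r1 t) = 0)
    ∧ (∀ t : ℝ, 2 * r1 t * deriv p1 t * deriv r1 t + 3 * p1 t * (deriv r1 t)^2
        - 2 * p1 t * r1 t * deriv (deriv r1) t = 0) := by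
  have hq1d : Differentiable ℝ q1 := hq1.differentiable (by simp)
  have hq2d : Differentiable ℝ q2 := hq2.differentiable (by simp)
  have hEd : Differentiable ℝ E := fun t =>
    (funext hE ▸ hasDerivAt_exp_mul_integral hq1.continuous k0 0 t).differentiableAt
  have hE0 (t : ℝ) : E t ≠ 0 := hE t ▸ exp_ne_zero _
  have hLE (t : ℝ) : logDeriv E t = k0 * q1 t :=
    funext hE ▸ logDeriv_exp_mul_integral hq1.continuous k0 0 t
  have hLp1 (t : ℝ) : logDeriv p1 t = logDeriv q1 t + k0 * q1 t := by
    rw [funext hp1, logDeriv_const_mul_mul hk1 (hq1ne t) (hE0 t) (hq1d t) (hEd t), hLE]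
  have hLp2 (t : ℝ) : logDeriv p2 t = logDeriv q1 t - k0 * q1 t := by
    rw [funext hp2]
    simpa [hLE] using logDeriv_const_mul_mul_inv_pow 1 (mul_ne_zero (neg_ne_zero.2 hr10) hk1)
      (hq1ne t) (hE0 t) (hq1d t) (hEd t)
  have hLr1 : logDeriv r1 = fun t => -2 * k0 * q1 t := by
    funext t
    rw [funext hr1, logDeriv_const_mul t _ hr10, logDeriv_fun_inv_pow (hEd t), hLE]
    push_cast; ring
  have hLr2 (t : ℝ) : logDeriv r2 t = logDeriv q1 t - logDeriv q2 t - 2 * k0 * q1 t := by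
    rw [funext hr2, logDeriv_const_mul_mul_inv_pow (f := fun u => q1 u / q2 u) 2 hr20
      (div_ne_zero (hq1ne t) (hq2ne t)) (hE0 t) ((hq1d t).div (hq2d t) (hq2ne t)) (hEd t),
      logDeriv_div t (hq1ne t) (hq2ne t) (hq1d t) (hq2d t), hLE]
    push_cast; ring
  have hr1d : Differentiable ℝ r1 := by
    rw [funext hr1]; fun_prop (disch := exact hE0 _)
  have hr10' (t : ℝ) : r1 t ≠ 0 := by
    rw [hr1]; exact mul_ne_zero hr10 (pow_ne_zero 2 (inv_ne_zero (hE0 t)))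
  have hiv (t : ℝ) : logDeriv p1 t = logDeriv q1 t - logDeriv r1 t / 2 := by
    rw [hLp1, hLr1]; ring
  refine ⟨fun t => ?_, fun t => ?_, fun t => ?_, fun t => ?_, fun t => ?_⟩
  · rw [hp1, hp2, hr1]; field_simp [hE0 t]; ring
  · simp only [← logDeriv_apply, hLp1, hLp2, hLr1]; ring
  · simp only [← logDeriv_apply, hLr2, hLr1]; ring
  · rw [div_mul_eq_div_div_swap]; simp only [← logDeriv_apply, hiv]; ring
  · have hp10 : p1 t ≠ 0 := by rw [hp1]; exact mul_ne_zero (mul_ne_zero hk1 (hq1ne t)) (hE0 t)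
    exact second_order_constraint_of_logDeriv hr1d hr10' hp10 (hq1ne t) (hq1d t) hLr1 (hiv t)
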